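/- Let N ∈ ℕ with N ≥ 3, J > 0, h ≠ 0, ρ > 0, and ε < h²/(2J). Define m_± := −h/J ± √(h²/J² − 2ε/J) and assume m_+² < ρ and m_−² < ρ. Set m := −h/J + sgn(h)·√(h²/J² − 2ε/J), and let μ_MC^{ε,ρ;N} be the microcanonical energy ensemble. Then for every measurable f : ℝ^Λ → ℝ with ∫|f| dμ_MC^{m_+,ρ;N} ≤ K and ∫|f| dμ_MC^{m_−,ρ;N} ≤ K for some K ≥ 0, one has |∫ f dμ_MC^{ε,ρ;N} − ∫ f dμ_MC^{m,ρ;N}| ≤ 2K · | ( ρ − (|h|/J + √(h²/J² − 2ε/J))² ) / ( ρ − (|h|/J − √(h²/J² − 2ε/J))² ) |^{(N−3)/2}, and the ratio inside the absolute value has modulus strictly less than one, so the error is exponentially small in N. -/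

import Mathlib

open MeasureTheory ProbabilityTheory Matrix

/-- The specific `p`-norm fluctuation distance `w_p(μ₁, μ₂; N)`:
the infimum over all couplings `γ` of `μ₁` and `μ₂` of
`∫ (1/N) ∑ᵢ |xᵢ - yᵢ|^p dγ`, raised to the power `1/p`. -/
noncomputable def fluctDist (p : ℝ) (N : ℕ) (μ₁ μ₂ : Measure (Fin N → ℝ)) : ℝ :=
  sInf {c : ℝ | ∃ γ : Measure ((Fin N → ℝ) × (Fin N → ℝ)), IsProbabilityMeasure γ ∧
      γ.map Prod.fst = μ₁ ∧ γ.map Prod.snd = μ₂ ∧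
      c = ∫ xy, (N : ℝ)⁻¹ * ∑ i, |xy.1 i - xy.2 i| ^ p ∂γ} ^ (1 / p)

/-- The standard Gaussian measure on `ℝ^N`. -/
noncomputable def stdGaussian (N : ℕ) : Measure (Fin N → ℝ) :=
  Measure.pi fun _ => gaussianReal 0 1

/-- `U` is an orthogonal matrix such that the first coordinate of `U x` is
`N^{-1/2} ∑ᵢ xᵢ`. -/
def GoodRotation {N : ℕ} (hN : 0 < N) (U : Matrix (Fin N) (Fin N) ℝ) : Prop :=
  Uᵀ * U = 1 ∧ ∀ x : Fin N → ℝ, U.mulVec x ⟨0, hN⟩ = (∑ i, x i) / Real.sqrt N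

/-- The auxiliary microcanonical ensemble `μ_MC^{m,ρ;N}` with magnetization density `m` and
particle density `ρ`: the pushforward under `U⁻¹` of the product of the Dirac mass at `m √N`
in the first coordinate with the uniform probability measure on the sphere of radius
`√(N(ρ − m²))` in the remaining `N − 1` coordinates.  The uniform sphere measure is realized
as the pushforward of the standard Gaussian on the remaining coordinates under radial
normalization. -/
noncomputable def mcSpherical {N : ℕ} (hN : 0 < N) (U : Matrix (Fin N) (Fin N) ℝ)
    (m ρ : ℝ) : Measure (Fin N → ℝ) :=
  (stdGaussian N).map fun x =>
    U⁻¹.mulVec fun i =>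
      if i = ⟨0, hN⟩ then m * Real.sqrt N
      else Real.sqrt (N * (ρ - m ^ 2)) * x i /
        Real.sqrt (∑ j ∈ Finset.univ.filter (fun j => j ≠ (⟨0, hN⟩ : Fin N)), x j ^ 2)

/-- The specific auxiliary microcanonical partition function
`Z_MC(m,ρ;N) = (ρ − m²)^{(N−3)/2}`. -/
noncomputable def Zmc (N : ℕ) (m ρ : ℝ) : ℝ :=
  (ρ - m ^ 2) ^ (((N : ℝ) - 3) / 2)

/-- The microcanonical energy ensemble `μ_MC^{ε,ρ;N}` for `h ≠ 0`, `ε < h²/(2J)` and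
`m_±² < ρ`: the convex combination of the two fixed magnetization ensembles `μ_MC^{m_±,ρ;N}`
with weights `Z_MC(m_±,ρ;N)/(Z_MC(m_+,ρ;N) + Z_MC(m_−,ρ;N))`. -/
noncomputable def mcEnergy {N : ℕ} (hN : 0 < N) (U : Matrix (Fin N) (Fin N) ℝ)
    (J h ρ ε : ℝ) : Measure (Fin N → ℝ) :=
  let mp := -h / J + Real.sqrt (h ^ 2 / J ^ 2 - 2 * ε / J)
  let mm := -h / J - Real.sqrt (h ^ 2 / J ^ 2 - 2 * ε / J)
  ENNReal.ofReal (Zmc N mp ρ / (Zmc N mp ρ + Zmc N mm ρ)) • mcSpherical hN U mp ρ +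
    ENNReal.ofReal (Zmc N mm ρ / (Zmc N mp ρ + Zmc N mm ρ)) • mcSpherical hN U mm ρ

/-!
The energy ensemble is a mixture of the two magnetization ensembles `μ_MC^{m_±}` with weights
proportional to `Z_MC(m_±)`. Writing `s = √(h²/J² − 2ε/J)`, the magnetization `m` chosen by the
sign of `h` has `m² = (|h|/J − s)²`, while the other one has square `(|h|/J + s)² > m²`, so `m`
carries the dominant weight. A mixture differs from its dominant component by at most the
other weight times `2K`, and that weight is at most `Z_MC(other)/Z_MC(m)`, which is the stated
ratio raised to `(N − 3)/2`.
-/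

section Mixture

variable {α : Type*} [MeasurableSpace α] {μ ν : Measure α} {f : α → ℝ}

lemma integral_ofReal_smul_add_ofReal_smul {p q : ℝ} (hp : 0 ≤ p) (hq : 0 ≤ q)
    (hμ : Integrable f μ) (hν : Integrable f ν) :
    ∫ x, f x ∂(ENNReal.ofReal p • μ + ENNReal.ofReal q • ν) =
      p * ∫ x, f x ∂μ + q * ∫ x, f x ∂ν := by
  rw [integral_add_measure (hμ.smul_measure ENNReal.ofReal_ne_top)
      (hν.smul_measure ENNReal.ofReal_ne_top), integral_smul_measure, integral_smul_measure,
    ENNReal.toReal_ofReal hp, ENNReal.toReal_ofReal hq, smul_eq_mul, smul_eq_mul]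

lemma abs_integral_convex_mix_sub_le {p q : ℝ} (hp : 0 ≤ p) (hq : 0 ≤ q) (hpq : p + q = 1)
    (hμ : Integrable f μ) (hν : Integrable f ν) :
    |∫ x, f x ∂(ENNReal.ofReal p • μ + ENNReal.ofReal q • ν) - ∫ x, f x ∂μ| ≤
      q * (∫ x, |f x| ∂μ + ∫ x, |f x| ∂ν) := by
  have hdiff : p * ∫ x, f x ∂μ + q * ∫ x, f x ∂ν - ∫ x, f x ∂μ =
      q * (∫ x, f x ∂ν - ∫ x, f x ∂μ) := by
    rw [show p = 1 - q by linarith]; ring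
  rw [integral_ofReal_smul_add_ofReal_smul hp hq hμ hν, hdiff, abs_mul, abs_of_nonneg hq]
  gcongr
  calc |∫ x, f x ∂ν - ∫ x, f x ∂μ| ≤ |∫ x, f x ∂ν| + |∫ x, f x ∂μ| := abs_sub _ _
    _ ≤ ∫ x, |f x| ∂ν + ∫ x, |f x| ∂μ :=
        add_le_add abs_integral_le_integral_abs abs_integral_le_integral_abs
    _ = ∫ x, |f x| ∂μ + ∫ x, |f x| ∂ν := add_comm _ _

lemma abs_integral_weighted_mix_sub_le {Zμ Zν K : ℝ} (hZμ : 0 < Zμ) (hZν : 0 ≤ Zν)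
    (hμ : Integrable f μ) (hν : Integrable f ν)
    (hKμ : ∫ x, |f x| ∂μ ≤ K) (hKν : ∫ x, |f x| ∂ν ≤ K) :
    |∫ x, f x ∂(ENNReal.ofReal (Zμ / (Zμ + Zν)) • μ + ENNReal.ofReal (Zν / (Zμ + Zν)) • ν) -
        ∫ x, f x ∂μ| ≤ 2 * K * (Zν / Zμ) := by
  have hZ : 0 < Zμ + Zν := by linarith
  have hweights : Zμ / (Zμ + Zν) + Zν / (Zμ + Zν) = 1 := by
    rw [← add_div, div_self hZ.ne']
  calc _ ≤ Zν / (Zμ + Zν) * (∫ x, |f x| ∂μ + ∫ x, |f x| ∂ν) :=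
        abs_integral_convex_mix_sub_le (by positivity) (by positivity) hweights hμ hν
    _ ≤ Zν / Zμ * (2 * K) := by
        gcongr <;> linarith
    _ = 2 * K * (Zν / Zμ) := mul_comm _ _

end Mixture

lemma Zmc_pos {N : ℕ} {m ρ : ℝ} (hm : m ^ 2 < ρ) : 0 < Zmc N m ρ :=
  Real.rpow_pos_of_pos (sub_pos.2 hm) _

lemma Zmc_div_Zmc {N : ℕ} {m m' ρ : ℝ} (hm : m ^ 2 < ρ) (hm' : m' ^ 2 < ρ) :
    Zmc N m ρ / Zmc N m' ρ = |(ρ - m ^ 2) / (ρ - m' ^ 2)| ^ (((N : ℝ) - 3) / 2) := by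
  rw [abs_of_pos (div_pos (sub_pos.2 hm) (sub_pos.2 hm')),
    Real.div_rpow (sub_pos.2 hm).le (sub_pos.2 hm').le, Zmc, Zmc]

lemma neg_div_add_sign_mul_sq {h : ℝ} (hh : h ≠ 0) (J s : ℝ) :
    (-h / J + Real.sign h * s) ^ 2 = (|h| / J - s) ^ 2 := by
  rcases hh.lt_or_gt with hneg | hpos
  · rw [Real.sign_of_neg hneg, abs_of_neg hneg]; ring
  · rw [Real.sign_of_pos hpos, abs_of_pos hpos]; ring

lemma neg_div_sub_sign_mul_sq {h : ℝ} (hh : h ≠ 0) (J s : ℝ) :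
    (-h / J - Real.sign h * s) ^ 2 = (|h| / J + s) ^ 2 := by
  rcases hh.lt_or_gt with hneg | hpos
  · rw [Real.sign_of_neg hneg, abs_of_neg hneg]; ring
  · rw [Real.sign_of_pos hpos, abs_of_pos hpos]; ring

lemma add_sub_sign_mul_sq_lt {h x s ρ : ℝ} (hh : h ≠ 0) (hp : (x + s) ^ 2 < ρ)
    (hm : (x - s) ^ 2 < ρ) : (x + Real.sign h * s) ^ 2 < ρ ∧ (x - Real.sign h * s) ^ 2 < ρ := by
  rcases Real.sign_apply_eq_of_ne_zero h hh with hsign | hsign <;>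
    simp only [hsign, neg_one_mul, one_mul, ← sub_eq_add_neg, sub_neg_eq_add]
  exacts [⟨hm, hp⟩, ⟨hp, hm⟩]

lemma abs_integral_mcEnergy_sub_le {N : ℕ} (hN : 0 < N) (U : Matrix (Fin N) (Fin N) ℝ)
    {J h ρ ε K : ℝ} (hh : h ≠ 0) {f : (Fin N → ℝ) → ℝ}
    (hmp2 : (-h / J + √(h ^ 2 / J ^ 2 - 2 * ε / J)) ^ 2 < ρ)
    (hmm2 : (-h / J - √(h ^ 2 / J ^ 2 - 2 * ε / J)) ^ 2 < ρ)
    (hintp : Integrable f (mcSpherical hN U (-h / J + √(h ^ 2 / J ^ 2 - 2 * ε / J)) ρ))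
    (hintm : Integrable f (mcSpherical hN U (-h / J - √(h ^ 2 / J ^ 2 - 2 * ε / J)) ρ))
    (hKp : ∫ x, |f x| ∂(mcSpherical hN U (-h / J + √(h ^ 2 / J ^ 2 - 2 * ε / J)) ρ) ≤ K)
    (hKm : ∫ x, |f x| ∂(mcSpherical hN U (-h / J - √(h ^ 2 / J ^ 2 - 2 * ε / J)) ρ) ≤ K) :
    |∫ x, f x ∂(mcEnergy hN U J h ρ ε) -
        ∫ x, f x ∂(mcSpherical hN U (-h / J + Real.sign h * √(h ^ 2 / J ^ 2 - 2 * ε / J)) ρ)| ≤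
      2 * K * (Zmc N (-h / J - Real.sign h * √(h ^ 2 / J ^ 2 - 2 * ε / J)) ρ /
        Zmc N (-h / J + Real.sign h * √(h ^ 2 / J ^ 2 - 2 * ε / J)) ρ) := by
  rcases Real.sign_apply_eq_of_ne_zero h hh with hsign | hsign <;>
    simp only [hsign, neg_mul, one_mul, sub_neg_eq_add, ← sub_eq_add_neg] <;> unfold mcEnergy
  · rw [add_comm (ENNReal.ofReal _ • _), add_comm (Zmc N _ ρ)]
    exact abs_integral_weighted_mix_sub_le (Zmc_pos hmm2) (Zmc_pos hmp2).le hintm hintp hKm hKp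
  · exact abs_integral_weighted_mix_sub_le (Zmc_pos hmp2) (Zmc_pos hmm2).le hintp hintm hKp hKm

theorem stmt13_general (N : ℕ) (hN : 0 < N) (J h ρ ε : ℝ)
    (hJ : 0 < J) (hh : h ≠ 0) (hε : ε < h ^ 2 / (2 * J))
    (hmp2 : (-h / J + Real.sqrt (h ^ 2 / J ^ 2 - 2 * ε / J)) ^ 2 < ρ)
    (hmm2 : (-h / J - Real.sqrt (h ^ 2 / J ^ 2 - 2 * ε / J)) ^ 2 < ρ)
    (U : Matrix (Fin N) (Fin N) ℝ)
    (m : ℝ) (hm : m = -h / J + Real.sign h * Real.sqrt (h ^ 2 / J ^ 2 - 2 * ε / J))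
    (f : (Fin N → ℝ) → ℝ) (K : ℝ)
    (hintp : Integrable f (mcSpherical hN U (-h / J + Real.sqrt (h ^ 2 / J ^ 2 - 2 * ε / J)) ρ))
    (hintm : Integrable f (mcSpherical hN U (-h / J - Real.sqrt (h ^ 2 / J ^ 2 - 2 * ε / J)) ρ))
    (hKp : ∫ x, |f x| ∂(mcSpherical hN U (-h / J + Real.sqrt (h ^ 2 / J ^ 2 - 2 * ε / J)) ρ) ≤ K)
    (hKm : ∫ x, |f x| ∂(mcSpherical hN U (-h / J - Real.sqrt (h ^ 2 / J ^ 2 - 2 * ε / J)) ρ) ≤ K) :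
    |(∫ x, f x ∂(mcEnergy hN U J h ρ ε)) - ∫ x, f x ∂(mcSpherical hN U m ρ)| ≤
        2 * K * |(ρ - (|h| / J + Real.sqrt (h ^ 2 / J ^ 2 - 2 * ε / J)) ^ 2) /
            (ρ - (|h| / J - Real.sqrt (h ^ 2 / J ^ 2 - 2 * ε / J)) ^ 2)| ^ (((N : ℝ) - 3) / 2) ∧
      |(ρ - (|h| / J + Real.sqrt (h ^ 2 / J ^ 2 - 2 * ε / J)) ^ 2) /
          (ρ - (|h| / J - Real.sqrt (h ^ 2 / J ^ 2 - 2 * ε / J)) ^ 2)| < 1 := by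
  have hbound := abs_integral_mcEnergy_sub_le hN U hh hmp2 hmm2 hintp hintm hKp hKm
  set s := √(h ^ 2 / J ^ 2 - 2 * ε / J)
  obtain ⟨hgoodρ, hbadρ⟩ := add_sub_sign_mul_sq_lt hh hmp2 hmm2
  rw [Zmc_div_Zmc hbadρ hgoodρ, neg_div_add_sign_mul_sq hh, neg_div_sub_sign_mul_sq hh,
    ← hm] at hbound
  rw [neg_div_add_sign_mul_sq hh] at hgoodρ
  rw [neg_div_sub_sign_mul_sq hh] at hbadρ
  refine ⟨hbound, ?_⟩
  have hs : 0 < s := by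
    have hrad : h ^ 2 / J ^ 2 - 2 * ε / J = 2 / J * (h ^ 2 / (2 * J) - ε) := by field_simp
    exact Real.sqrt_pos.2 (hrad ▸ mul_pos (by positivity) (sub_pos.2 hε))
  have hlt : (|h| / J - s) ^ 2 < (|h| / J + s) ^ 2 := by
    have : 0 < |h| / J := div_pos (abs_pos.2 hh) hJ
    nlinarith
  rw [abs_of_pos (div_pos (by linarith) (by linarith)), div_lt_one (by linarith)]
  linarith

theorem stmt13 (N : ℕ) (hN : 0 < N) (hN3 : 3 ≤ N) (J h ρ ε : ℝ)
    (hJ : 0 < J) (hh : h ≠ 0) (hρ : 0 < ρ) (hε : ε < h ^ 2 / (2 * J))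
    (hmp2 : (-h / J + Real.sqrt (h ^ 2 / J ^ 2 - 2 * ε / J)) ^ 2 < ρ)
    (hmm2 : (-h / J - Real.sqrt (h ^ 2 / J ^ 2 - 2 * ε / J)) ^ 2 < ρ)
    (U : Matrix (Fin N) (Fin N) ℝ) (hU : GoodRotation hN U)
    (m : ℝ) (hm : m = -h / J + Real.sign h * Real.sqrt (h ^ 2 / J ^ 2 - 2 * ε / J))
    (f : (Fin N → ℝ) → ℝ) (hf : Measurable f) (K : ℝ) (hK : 0 ≤ K)
    (hintp : Integrable f (mcSpherical hN U (-h / J + Real.sqrt (h ^ 2 / J ^ 2 - 2 * ε / J)) ρ))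
    (hintm : Integrable f (mcSpherical hN U (-h / J - Real.sqrt (h ^ 2 / J ^ 2 - 2 * ε / J)) ρ))
    (hKp : ∫ x, |f x| ∂(mcSpherical hN U (-h / J + Real.sqrt (h ^ 2 / J ^ 2 - 2 * ε / J)) ρ) ≤ K)
    (hKm : ∫ x, |f x| ∂(mcSpherical hN U (-h / J - Real.sqrt (h ^ 2 / J ^ 2 - 2 * ε / J)) ρ) ≤ K) :
    |(∫ x, f x ∂(mcEnergy hN U J h ρ ε)) - ∫ x, f x ∂(mcSpherical hN U m ρ)| ≤
        2 * K * |(ρ - (|h| / J + Real.sqrt (h ^ 2 / J ^ 2 - 2 * ε / J)) ^ 2) /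
            (ρ - (|h| / J - Real.sqrt (h ^ 2 / J ^ 2 - 2 * ε / J)) ^ 2)| ^ (((N : ℝ) - 3) / 2) ∧
      |(ρ - (|h| / J + Real.sqrt (h ^ 2 / J ^ 2 - 2 * ε / J)) ^ 2) /
          (ρ - (|h| / J - Real.sqrt (h ^ 2 / J ^ 2 - 2 * ε / J)) ^ 2)| < 1 :=
  stmt13_general N hN J h ρ ε hJ hh hε hmp2 hmm2 U m hm f K hintp hintm hKp hKm
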